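/- arXiv:2502.11032 — 3 statements merged into one kernel-verified Lean document; each statement's English description precedes it below -/
import Mathlib

section
/- Suppose the working model satisfies m̂(x_0) = (1/N^k) Σ_{j_1∈U}...Σ_{j_k∈U} g(x_0; z_{j_1},...,z_{j_k}) for a kernel g symmetric in its last k arguments. Then the model-assisted estimator â = (1/N) Σ_{i∈U}[y_i I_i/π_i + (1 − I_i/π_i) m̂(x_i)] equals the degree-(k+1) V-statistic (1/N^{k+1}) Σ_{j_1∈U}...Σ_{j_{k+1}∈U} h*(z_{j_1},...,z_{j_{k+1}}) with symmetric kernel h*(z_{j_1},...,z_{j_{k+1}}) = (1/(k+1)) Σ_{p=1}^{k+1} [ y_{j_p} I_{j_p}/π_{j_p} + (1 − I_{j_p}/π_{j_p}) g(x_{j_p}; {z_{j_1},...,z_{j_{k+1}}} \ {z_{j_p}}) ]. -/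
/-- Theorem 1: if the working model prediction at any point is a degree-`k`
V-statistic over the population with kernel `g` symmetric in its last `k`
arguments, then the model-assisted estimator is a degree-`(k+1)` V-statistic
with the stated symmetric kernel `h*`. -/
theorem stmt3 {X : Type*} (N k : ℕ) (x : Fin N → X) (y π I : Fin N → ℝ)
    (hπ : ∀ i, 0 < π i) (hI : ∀ i, I i = 0 ∨ I i = 1)
    (g : X → (Fin k → Fin N) → ℝ)
    (hsym : ∀ (x0 : X) (σ : Equiv.Perm (Fin k)) (j : Fin k → Fin N), g x0 (j ∘ σ) = g x0 j)
    (mhat : Fin N → ℝ)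
    (hm : ∀ i, mhat i = (1 / (N : ℝ) ^ k) * ∑ j : Fin k → Fin N, g (x i) j) :
    (1 / (N : ℝ)) * ∑ i, (y i * I i / π i + (1 - I i / π i) * mhat i)
      = (1 / (N : ℝ) ^ (k + 1)) * ∑ j : Fin (k + 1) → Fin N,
          (1 / ((k : ℝ) + 1)) * ∑ p : Fin (k + 1),
            (y (j p) * I (j p) / π (j p)
              + (1 - I (j p) / π (j p)) * g (x (j p)) (fun l : Fin k => j (p.succAbove l))) := by
  rcases Nat.eq_zero_or_pos N with hN | hN
  · subst hN
    simp [Finset.sum_const]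
  have hNpos : (0 : ℝ) < N := by exact_mod_cast hN
  have hk1 : ((k : ℝ) + 1) ≠ 0 := by positivity
  have key : ∀ p : Fin (k + 1),
      (∑ j : Fin (k + 1) → Fin N, (y (j p) * I (j p) / π (j p)
          + (1 - I (j p) / π (j p)) * g (x (j p)) (fun l : Fin k => j (p.succAbove l))))
      = (N : ℝ) ^ k * ∑ i, (y i * I i / π i + (1 - I i / π i) * mhat i) := by
    intro p
    rw [← (Fin.insertNthEquiv (fun _ => Fin N) p).sum_comp
        (fun j : Fin (k + 1) → Fin N => (y (j p) * I (j p) / π (j p)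
          + (1 - I (j p) / π (j p)) * g (x (j p)) (fun l : Fin k => j (p.succAbove l))))]
    simp only [Fin.insertNthEquiv, Equiv.coe_fn_mk, Fin.insertNth_apply_same,
      Fin.insertNth_apply_succAbove]
    rw [Fintype.sum_prod_type]
    rw [Finset.mul_sum]
    refine Finset.sum_congr rfl fun i _ => ?_
    dsimp only
    have hsum : ∑ j' : Fin k → Fin N, g (x i) j' = (N : ℝ) ^ k * mhat i := by
      rw [hm i]
      field_simp
    have hcard : Fintype.card (Fin k → Fin N) = N ^ k := by
      simp
    rw [Finset.sum_add_distrib, ← Finset.mul_sum, hsum, Finset.sum_const,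
      Finset.card_univ, hcard]
    ring
  calc (1 / (N : ℝ)) * ∑ i, (y i * I i / π i + (1 - I i / π i) * mhat i)
      = (1 / (N : ℝ) ^ (k + 1)) * ∑ j : Fin (k + 1) → Fin N,
          (1 / ((k : ℝ) + 1)) * ∑ p : Fin (k + 1),
            (y (j p) * I (j p) / π (j p)
              + (1 - I (j p) / π (j p)) * g (x (j p)) (fun l : Fin k => j (p.succAbove l))) := by
        rw [← Finset.mul_sum, Finset.sum_comm]
        simp only [key]
        rw [Finset.sum_const, Finset.card_univ, Fintype.card_fin]
        field_simp
        ring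
end

section
/- Every degree-(k+1) V-statistic V = (1/N^{k+1}) Σ_{j_1∈U}...Σ_{j_{k+1}∈U} h*(z_{j_1},...,z_{j_{k+1}}) with symmetric kernel h* can be written as a degree-(k+1) U-statistic: V = (1/C(N,k+1)) Σ_{j_1<...<j_{k+1}} h_U(z_{j_1},...,z_{j_{k+1}}), where h_U(z_{j_1},...,z_{j_{k+1}}) = (C(N,k+1)/N^{k+1}) Σ_{s ∈ S_{k+1}({j_1,...,j_{k+1}})} h*(s)/C(N−u(s), k+1−u(s)), with S_{k+1}(B) the multiset of all (k+1)-tuples drawn with replacement (up to order) from B and u(s) the number of distinct elements of s. -/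
open Finset

/-- Number of `(k+1)`-subsets of `Fin N` containing a fixed set `A`. -/
lemma card_supersets (N k : ℕ) (A : Finset (Fin N)) (hA : A.card ≤ k + 1) :
    (((Finset.powersetCard (k + 1) (Finset.univ : Finset (Fin N)))).filter
        (fun S => A ⊆ S)).card = (N - A.card).choose (k + 1 - A.card) := by
  have hb : (((Finset.powersetCard (k + 1) (Finset.univ : Finset (Fin N)))).filter
        (fun S => A ⊆ S)).card = (Finset.powersetCard (k + 1 - A.card) Aᶜ).card := by
    refine Finset.card_bij' (fun S _ => S \ A) (fun T _ => T ∪ A) ?_ ?_ ?_ ?_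
    · intro S hS
      simp only [mem_filter, Finset.mem_powersetCard] at hS
      obtain ⟨⟨-, hcard⟩, hsub⟩ := hS
      rw [Finset.mem_powersetCard]
      constructor
      · intro x hx
        simp only [Finset.mem_sdiff] at hx
        simpa using hx.2
      · rw [Finset.card_sdiff_of_subset hsub, hcard]
    · intro T hT
      rw [Finset.mem_powersetCard] at hT
      obtain ⟨hsub, hcard⟩ := hT
      have hdisj : Disjoint T A := by
        refine Finset.disjoint_left.2 fun x hx hxA => ?_
        have := hsub hx
        simp at this
        exact this hxA
      rw [Finset.mem_filter, Finset.mem_powersetCard]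
      refine ⟨⟨Finset.subset_univ _, ?_⟩, Finset.subset_union_right⟩
      rw [Finset.card_union_of_disjoint hdisj, hcard]
      omega
    · intro S hS
      simp only [mem_filter] at hS
      exact Finset.sdiff_union_of_subset hS.2
    · intro T hT
      rw [Finset.mem_powersetCard] at hT
      have hdisj : Disjoint T A := by
        refine Finset.disjoint_left.2 fun x hx hxA => ?_
        have := hT.1 hx
        simp at this
        exact this hxA
      exact Finset.union_sdiff_cancel_right hdisj
  rw [hb, Finset.card_powersetCard, Finset.card_compl, Fintype.card_fin]

/-- Fiber counting: the number of pairs `(j, t)` with `j` strictly monotone and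
`j ∘ t = f` equals `C(N - u, k + 1 - u)` where `u` is the number of distinct values of `f`. -/
lemma fiber_card (N k : ℕ) (f : Fin (k + 1) → Fin N) :
    (((Finset.univ.filter (fun j : Fin (k + 1) → Fin N => StrictMono j)) ×ˢ
        (Finset.univ : Finset (Fin (k + 1) → Fin (k + 1)))).filter
        (fun p => p.1 ∘ p.2 = f)).card
      = (N - (Finset.image f Finset.univ).card).choose
          (k + 1 - (Finset.image f Finset.univ).card) := by
  set A := Finset.image f Finset.univ with hA
  have hAle : A.card ≤ k + 1 := by
    calc A.card ≤ (Finset.univ : Finset (Fin (k + 1))).card := Finset.card_image_le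
    _ = k + 1 := by simp
  rw [← card_supersets N k A hAle]
  refine Finset.card_bij (fun p _ => Finset.image p.1 Finset.univ) ?_ ?_ ?_
  · intro p hp
    simp only [mem_filter, Finset.mem_product, Finset.mem_univ, and_true, true_and] at hp
    obtain ⟨hmono, heq⟩ := hp
    rw [Finset.mem_filter, Finset.mem_powersetCard]
    refine ⟨⟨Finset.subset_univ _, ?_⟩, ?_⟩
    · rw [Finset.card_image_of_injective _ hmono.injective, Finset.card_univ, Fintype.card_fin]
    · show Finset.image f Finset.univ ⊆ Finset.image p.1 Finset.univ
      intro x hx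
      simp only [Finset.mem_image] at hx ⊢
      obtain ⟨l, -, rfl⟩ := hx
      exact ⟨p.2 l, Finset.mem_univ _, congrFun heq l⟩
  · intro p hp q hq hpq
    simp only [mem_filter, Finset.mem_product, Finset.mem_univ, and_true, true_and] at hp hq
    obtain ⟨hmonop, heqp⟩ := hp
    obtain ⟨hmonoq, heqq⟩ := hq
    have hcard : (Finset.image p.1 Finset.univ).card = k + 1 := by
      rw [Finset.card_image_of_injective _ hmonop.injective, Finset.card_univ, Fintype.card_fin]
    have h1 : p.1 = (Finset.image p.1 Finset.univ).orderEmbOfFin hcard :=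
      Finset.orderEmbOfFin_unique hcard (fun x => Finset.mem_image_of_mem _ (Finset.mem_univ x))
        hmonop
    have hpq' : Finset.image p.1 Finset.univ = Finset.image q.1 Finset.univ := hpq
    have h2 : q.1 = (Finset.image p.1 Finset.univ).orderEmbOfFin hcard :=
      Finset.orderEmbOfFin_unique hcard
        (fun x => hpq' ▸ Finset.mem_image_of_mem _ (Finset.mem_univ x)) hmonoq
    have h12 : p.1 = q.1 := h1.trans h2.symm
    have ht : p.2 = q.2 := by
      funext l
      apply hmonop.injective
      have e1 : p.1 (p.2 l) = f l := congrFun heqp l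
      have e2 : q.1 (q.2 l) = f l := congrFun heqq l
      rw [e1, ← h12] at *
      rw [e1, ← e2, h12]
    exact Prod.ext h12 ht
  · intro S hS
    rw [Finset.mem_filter, Finset.mem_powersetCard] at hS
    obtain ⟨⟨-, hcard⟩, hsub⟩ := hS
    have hmemf : ∀ l, f l ∈ S := fun l =>
      hsub (Finset.mem_image_of_mem _ (Finset.mem_univ l))
    refine ⟨(fun l => S.orderEmbOfFin hcard l,
        fun l => (S.orderIsoOfFin hcard).symm ⟨f l, hmemf l⟩), ?_, ?_⟩
    · simp only [mem_filter, Finset.mem_product, Finset.mem_univ, and_true, true_and]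
      refine ⟨(S.orderEmbOfFin hcard).strictMono, ?_⟩
      funext l
      show S.orderEmbOfFin hcard ((S.orderIsoOfFin hcard).symm ⟨f l, hmemf l⟩) = f l
      rw [← Finset.coe_orderIsoOfFin_apply, OrderIso.apply_symm_apply]
    · refine Finset.eq_of_subset_of_card_le ?_ ?_
      · intro x hx
        simp only [Finset.mem_image] at hx
        obtain ⟨l, -, rfl⟩ := hx
        exact Finset.orderEmbOfFin_mem S hcard l
      · rw [hcard, Finset.card_image_of_injective _ (S.orderEmbOfFin hcard).injective,
          Finset.card_univ, Fintype.card_fin]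

/-- Proposition 1: every degree-`(k+1)` V-statistic with symmetric kernel `h*`
equals the degree-`(k+1)` U-statistic built from the kernel `h_U` which sums
`h*` over all `(k+1)`-tuples drawn with replacement from the given indices,
weighting each tuple `s` with `u(s)` distinct elements by
`1 / C(N - u(s), k + 1 - u(s))`. -/
theorem stmt4 {Z : Type*} (N k : ℕ) (hN : k + 1 ≤ N) (z : Fin N → Z)
    (h : (Fin (k + 1) → Z) → ℝ)
    (hsym : ∀ (σ : Equiv.Perm (Fin (k + 1))) (w : Fin (k + 1) → Z), h (w ∘ σ) = h w) :
    (1 / (N : ℝ) ^ (k + 1)) * ∑ j : Fin (k + 1) → Fin N, h (fun l => z (j l))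
      = (1 / (N.choose (k + 1) : ℝ)) *
          ∑ j ∈ Finset.univ.filter (fun j : Fin (k + 1) → Fin N => StrictMono j),
            ((N.choose (k + 1) : ℝ) / (N : ℝ) ^ (k + 1)) *
              ∑ t : Fin (k + 1) → Fin (k + 1),
                h (fun l => z (j (t l))) /
                  ((N - (Finset.image (fun l => j (t l)) Finset.univ).card).choose
                    (k + 1 - (Finset.image (fun l => j (t l)) Finset.univ).card) : ℝ) := by
  have hCpos : (0 : ℝ) < (N.choose (k + 1) : ℝ) := by
    exact_mod_cast Nat.choose_pos hN
  -- the weight function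
  set g : (Fin (k + 1) → Fin N) → ℝ := fun f =>
    h (fun l => z (f l)) /
      ((N - (Finset.image f Finset.univ).card).choose
        (k + 1 - (Finset.image f Finset.univ).card) : ℝ) with hg
  have key : ∑ f : Fin (k + 1) → Fin N, h (fun l => z (f l))
      = ∑ j ∈ Finset.univ.filter (fun j : Fin (k + 1) → Fin N => StrictMono j),
          ∑ t : Fin (k + 1) → Fin (k + 1), g (j ∘ t) := by
    rw [← Finset.sum_product']
    rw [← Finset.sum_fiberwise' (((Finset.univ.filter
        (fun j : Fin (k + 1) → Fin N => StrictMono j)) ×ˢ Finset.univ))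
        (fun p => p.1 ∘ p.2) g]
    refine Finset.sum_congr rfl fun f _ => ?_
    have hconst : ∀ p ∈ (((Finset.univ.filter
        (fun j : Fin (k + 1) → Fin N => StrictMono j)) ×ˢ Finset.univ)).filter
        (fun p => p.1 ∘ p.2 = f), g f = g f := fun _ _ => rfl
    rw [Finset.sum_const, fiber_card N k f, nsmul_eq_mul]
    have hAle : (Finset.image f Finset.univ).card ≤ k + 1 := by
      calc (Finset.image f Finset.univ).card
          ≤ (Finset.univ : Finset (Fin (k + 1))).card := Finset.card_image_le
      _ = k + 1 := by simp
    have hcpos : 0 < (N - (Finset.image f Finset.univ).card).choose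
        (k + 1 - (Finset.image f Finset.univ).card) :=
      Nat.choose_pos (by omega)
    rw [hg]
    field_simp
  rw [key, Finset.mul_sum, Finset.mul_sum]
  refine Finset.sum_congr rfl fun j _ => ?_
  have : ∑ t : Fin (k + 1) → Fin (k + 1),
      h (fun l => z (j (t l))) /
        ((N - (Finset.image (fun l => j (t l)) Finset.univ).card).choose
          (k + 1 - (Finset.image (fun l => j (t l)) Finset.univ).card) : ℝ)
      = ∑ t : Fin (k + 1) → Fin (k + 1), g (j ∘ t) := rfl
  rw [this]
  field_simp
end

section
/- The GREG estimator â = (1/N) Σ_{i∈U} m̂(x_i) + (1/N) Σ_{i∈S} (y_i − m̂(x_i))/π_i, with m̂(x) = xᵀ Q Σ_{j∈S} x_j y_j/π_j and Q = (Σ_{i∈U} x_i x_iᵀ)^{-1}, equals (1/N²) Σ_{i∈U} Σ_{j∈U} h*(z_i,z_j) where h*(z_i,z_j) = (1/2)[ (1 + N((1/N)t_xᵀ − (I_j/π_j)x_jᵀ) Q x_i)(y_i I_i/π_i) + (1 + N((1/N)t_xᵀ − (I_i/π_i)x_iᵀ) Q x_j)(y_j I_j/π_j) ] and t_x = Σ_{i∈U}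 x_i. -/
/-!
With the Horvitz–Thompson estimators `t̂_y = ∑ yᵢ Iᵢ/πᵢ`, `t̂_x = ∑ xᵢ Iᵢ/πᵢ` and
`t̂_xy = ∑ xᵢ yᵢ Iᵢ/πᵢ`, the GREG estimator is `(t̂_y + (t_x - t̂_x)ᵀ Q t̂_xy) / N`.
The double sum of the symmetrized kernel equals that of its first half
`g(i, j) = (1 + (t_x - N (Iⱼ/πⱼ) xⱼ)ᵀ Q xᵢ) yᵢ Iᵢ/πᵢ`; summing `g` over `j` gives
`N (1 + (t_x - t̂_x)ᵀ Q xᵢ) yᵢ Iᵢ/πᵢ`, and then over `i` gives `N` times the bracket above.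
-/

open Matrix Finset

theorem sum_sum_half_mul_add_swap {ι K : Type*} [Fintype ι] [DivisionRing K] [CharZero K]
    (g : ι → ι → K) : ∑ i, ∑ j, (1 / 2) * (g i j + g j i) = ∑ i, ∑ j, g i j := by
  simp only [mul_add, sum_add_distrib]
  rw [sum_comm (f := fun i j => (1 / 2 : K) * g j i), ← two_mul]
  simp only [← mul_sum, ← mul_assoc]
  norm_num

theorem sum_filter_eq_sum_boole_smul {ι R M : Type*} [Fintype ι] [Semiring R] [AddCommMonoid M]
    [Module R M] (I : ι → Bool) (f : ι → M) :
    ∑ i ∈ univ.filter (fun i => I i), f i = ∑ i, (if I i then (1 : R) else 0) • f i := by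
  simp only [sum_filter, ite_smul, one_smul, zero_smul]

section GREG

variable {N p : ℕ} (x : Fin N → Fin p → ℝ) (Q : Matrix (Fin p) (Fin p) ℝ)

theorem greg_eq_ht_add_regression_correction (y π : Fin N → ℝ) (I : Fin N → Bool) :
    let ind : Fin N → ℝ := fun i => if I i then 1 else 0
    let u := ∑ j ∈ univ.filter (fun j => I j), (y j / π j) • x j
    (1 / (N : ℝ)) * ∑ i, x i ⬝ᵥ Q *ᵥ u
        + (1 / (N : ℝ)) * ∑ i ∈ univ.filter (fun i => I i), (y i - x i ⬝ᵥ Q *ᵥ u) / π i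
      = (1 / (N : ℝ)) * (∑ i, y i * ind i / π i
          + (∑ i, x i - ∑ i, (ind i / π i) • x i) ⬝ᵥ Q *ᵥ ∑ i, (y i * ind i / π i) • x i) := by
  intro ind u
  have hu : u = ∑ i, (y i * ind i / π i) • x i := by
    simp only [u, sum_filter_eq_sum_boole_smul (R := ℝ), smul_smul]
    congr! 2 with i
    ring
  rw [sum_filter_eq_sum_boole_smul (R := ℝ), ← sum_dotProduct, sub_dotProduct,
    sum_dotProduct (s := univ), ← hu]
  simp only [sum_dotProduct, smul_dotProduct, smul_eq_mul, mul_sub, sub_div, sum_sub_distrib]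
  have hy : ∑ i, ind i * (y i / π i) = ∑ i, y i * ind i / π i :=
    sum_congr rfl fun i _ => by ring
  have hx : ∑ i, ind i * (x i ⬝ᵥ Q *ᵥ u / π i) = ∑ i, ind i / π i * (x i ⬝ᵥ Q *ᵥ u) :=
    sum_congr rfl fun i _ => by ring
  rw [hy, hx]
  ring

theorem sum_sum_greg_kernel (t : Fin p → ℝ) (a d : Fin N → ℝ) :
    ∑ i, ∑ j, (1 + (N : ℝ) * (((1 / (N : ℝ)) • t - d j • x j) ⬝ᵥ Q *ᵥ x i)) * a i
      = N * (∑ i, a i + (t - ∑ j, d j • x j) ⬝ᵥ Q *ᵥ ∑ i, a i • x i) := by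
  rcases eq_or_ne N 0 with rfl | hN
  · simp
  have hrow : ∀ i, ∑ j, (1 + (N : ℝ) * (((1 / (N : ℝ)) • t - d j • x j) ⬝ᵥ Q *ᵥ x i))
      = N * (1 + (t - ∑ j, d j • x j) ⬝ᵥ Q *ᵥ x i) := by
    intro i
    simp only [sum_add_distrib, ← mul_sum, ← sum_dotProduct, sum_sub_distrib, sum_const, card_univ,
      Fintype.card_fin]
    rw [← Nat.cast_smul_eq_nsmul ℝ N ((1 / (N : ℝ)) • t), smul_smul,
      mul_one_div_cancel (by exact_mod_cast hN), one_smul, nsmul_eq_mul, mul_one, mul_add, mul_one]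
  simp only [← sum_mul, hrow, mulVec_sum, dotProduct_sum, mulVec_smul, dotProduct_smul, smul_eq_mul]
  rw [← sum_add_distrib, mul_sum]
  exact sum_congr rfl fun i _ => by ring

end GREG

theorem stmt6_general (N p : ℕ) (x : Fin N → Fin p → ℝ) (y π : Fin N → ℝ)
    (I : Fin N → Bool)
    (Q : Matrix (Fin p) (Fin p) ℝ) :
    let ind : Fin N → ℝ := fun i => if I i then 1 else 0
    let tx : Fin p → ℝ := ∑ i, x i
    let mhat : (Fin p → ℝ) → ℝ := fun v =>
      v ⬝ᵥ Q.mulVec (∑ j ∈ Finset.univ.filter (fun j => I j), (y j / π j) • x j)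
    let hstar : Fin N → Fin N → ℝ := fun i j =>
      (1 / 2) *
        ((1 + (N : ℝ) * (((1 / (N : ℝ)) • tx - (ind j / π j) • x j) ⬝ᵥ Q.mulVec (x i)))
            * (y i * ind i / π i)
          + (1 + (N : ℝ) * (((1 / (N : ℝ)) • tx - (ind i / π i) • x i) ⬝ᵥ Q.mulVec (x j)))
            * (y j * ind j / π j))
    (1 / (N : ℝ)) * ∑ i, mhat (x i)
        + (1 / (N : ℝ)) * ∑ i ∈ Finset.univ.filter (fun i => I i), (y i - mhat (x i)) / π i
      = (1 / (N : ℝ) ^ 2) * ∑ i, ∑ j, hstar i j := by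
  intro ind tx mhat hstar
  rw [greg_eq_ht_add_regression_correction, sum_sum_half_mul_add_swap, sum_sum_greg_kernel]
  rcases eq_or_ne (N : ℝ) 0 with hN | hN
  · simp [hN]
  · field_simp
    rfl

/-- Proposition 2: the GREG estimator is a degree-2 V-statistic with the stated
symmetric kernel `h*`. -/
theorem stmt6 (N p : ℕ) (x : Fin N → Fin p → ℝ) (y π : Fin N → ℝ)
    (hπ : ∀ i, 0 < π i ∧ π i ≤ 1) (I : Fin N → Bool)
    (Q : Matrix (Fin p) (Fin p) ℝ)
    (hQ : Q = (∑ i, Matrix.vecMulVec (x i) (x i))⁻¹) :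
    let ind : Fin N → ℝ := fun i => if I i then 1 else 0
    let tx : Fin p → ℝ := ∑ i, x i
    let mhat : (Fin p → ℝ) → ℝ := fun v =>
      v ⬝ᵥ Q.mulVec (∑ j ∈ Finset.univ.filter (fun j => I j), (y j / π j) • x j)
    let hstar : Fin N → Fin N → ℝ := fun i j =>
      (1 / 2) *
        ((1 + (N : ℝ) * (((1 / (N : ℝ)) • tx - (ind j / π j) • x j) ⬝ᵥ Q.mulVec (x i)))
            * (y i * ind i / π i)
          + (1 + (N : ℝ) * (((1 / (N : ℝ)) • tx - (ind i / π i) • x i) ⬝ᵥ Q.mulVec (x j)))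
            * (y j * ind j / π j))
    (1 / (N : ℝ)) * ∑ i, mhat (x i)
        + (1 / (N : ℝ)) * ∑ i ∈ Finset.univ.filter (fun i => I i), (y i - mhat (x i)) / π i
      = (1 / (N : ℝ) ^ 2) * ∑ i, ∑ j, hstar i j :=
  stmt6_general N p x y π I Q
end
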